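/- Let ν₀ > 0 and 1 < p < 2, and let S(A) = ν₀(1+|A|²)^{(p-2)/2} A on symmetric 2×2 matrices. Then there is a constant C > 0 depending only on p and ν₀ such that for all symmetric 2×2 matrices A, B: ∑_{k,l} (S_{kl}(A) - S_{kl}(B))(A_{kl} - B_{kl}) ≥ C (1 + |A|² + |B|²)^{(p-2)/2} |A - B|². -/

import Mathlib

/-!
The stress `S x = ν₀ (1 + ‖x‖²)^((p-2)/2) • x` makes sense in any real inner product space, and
the estimate holds there with `C = ν₀ (p - 1)`. With `a = ‖x‖`, `b = ‖y‖` and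
`ψ = (1 + a² + b²)^((p-2)/2)`, the defect `⟪S x - S y, x - y⟫ - C ψ ‖x - y‖²` is `ν₀` times the
same defect for the scalar map `t ↦ t (1 + t²)^((p-2)/2)` at `(a, b)`, plus `a b - ⟪x, y⟫ ≥ 0`
times a weight that is nonnegative because `p - 1 ≤ 1`. The scalar estimate is the mean value
theorem: the derivative `(1 + t²)^((p-2)/2 - 1) (1 + (p - 1) t²)` is at least
`(p - 1) (1 + t²)^((p-2)/2) ≥ (p - 1) ψ` for `t` between `a` and `b`, as `p ≤ 2`.
2×2 matrices with the Frobenius inner product form the Euclidean space indexed by `Fin 2 × Fin 2`.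
-/

open Finset

/-- Frobenius norm squared of a 2×2 real matrix. -/
def frobSq (A : Matrix (Fin 2) (Fin 2) ℝ) : ℝ := ∑ i, ∑ j, (A i j) ^ 2

/-- The power-law stress tensor S(A) = ν₀ (1+|A|²)^{(p-2)/2} A. -/
noncomputable def Spow (ν₀ p : ℝ) (A : Matrix (Fin 2) (Fin 2) ℝ) : Matrix (Fin 2) (Fin 2) ℝ :=
  fun k l => ν₀ * (1 + frobSq A) ^ ((p - 2) / 2) * A k l

open Set RealInnerProductSpace

theorem hasDerivAt_mul_one_add_sq_rpow (q x : ℝ) :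
    HasDerivAt (fun x : ℝ => x * (1 + x ^ 2) ^ q)
      ((1 + x ^ 2) ^ (q - 1) * (1 + (2 * q + 1) * x ^ 2)) x := by
  have hpos : 0 < 1 + x ^ 2 := by positivity
  refine ((hasDerivAt_id' x).mul
    (((hasDerivAt_pow 2 x).const_add 1).rpow_const (p := q) (Or.inl hpos.ne'))).congr_deriv ?_
  rw [Real.rpow_sub_one hpos.ne']
  field_simp
  ring

theorem le_deriv_mul_one_add_sq_rpow {p : ℝ} (hp : p ≤ 2) (x : ℝ) :
    (p - 1) * (1 + x ^ 2) ^ ((p - 2) / 2) ≤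
      deriv (fun x : ℝ => x * (1 + x ^ 2) ^ ((p - 2) / 2)) x := by
  have hpos : 0 < 1 + x ^ 2 := by positivity
  rw [(hasDerivAt_mul_one_add_sq_rpow _ x).deriv, Real.rpow_sub_one hpos.ne', div_mul_eq_mul_div,
    le_div_iff₀ hpos]
  have hfactor : (p - 1) * (1 + x ^ 2) ≤ 1 + (2 * ((p - 2) / 2) + 1) * x ^ 2 := by nlinarith
  linarith [mul_le_mul_of_nonneg_left hfactor (Real.rpow_nonneg hpos.le ((p - 2) / 2))]

theorem le_mul_one_add_sq_rpow_sub_mul_sub {p : ℝ} (hp1 : 1 ≤ p) (hp2 : p ≤ 2) (a b : ℝ) :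
    (p - 1) * (1 + a ^ 2 + b ^ 2) ^ ((p - 2) / 2) * (a - b) ^ 2 ≤
      (a * (1 + a ^ 2) ^ ((p - 2) / 2) - b * (1 + b ^ 2) ^ ((p - 2) / 2)) * (a - b) := by
  wlog hba : b ≤ a generalizing a b
  · have := this b a (le_of_not_ge hba)
    rw [add_right_comm] at this
    linarith
  set f : ℝ → ℝ := fun x => x * (1 + x ^ 2) ^ ((p - 2) / 2)
  have hf : Differentiable ℝ f := fun x => (hasDerivAt_mul_one_add_sq_rpow _ x).differentiableAt
  have hslope : (p - 1) * (1 + a ^ 2 + b ^ 2) ^ ((p - 2) / 2) * (a - b) ≤ f a - f b := by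
    refine (convex_Icc b a).mul_sub_le_image_sub_of_le_deriv hf.continuous.continuousOn
      hf.differentiableOn (fun c hc => ?_) b (left_mem_Icc.2 hba) a (right_mem_Icc.2 hba) hba
    rw [interior_Icc] at hc
    have hc2 : c ^ 2 ≤ a ^ 2 + b ^ 2 := by
      rcases le_total 0 c with h | h <;> nlinarith [hc.1, hc.2]
    refine le_trans ?_ (le_deriv_mul_one_add_sq_rpow hp2 c)
    exact mul_le_mul_of_nonneg_left (Real.rpow_le_rpow_of_nonpos (by positivity)
      (by linarith) (by linarith)) (by linarith)
  calc _ = (p - 1) * (1 + a ^ 2 + b ^ 2) ^ ((p - 2) / 2) * (a - b) * (a - b) := by ring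
    _ ≤ _ := mul_le_mul_of_nonneg_right hslope (sub_nonneg.2 hba)

section PowerLaw

variable {E : Type*} [NormedAddCommGroup E] [InnerProductSpace ℝ E]

noncomputable def powerLawStress (ν₀ p : ℝ) (x : E) : E :=
  (ν₀ * (1 + ‖x‖ ^ 2) ^ ((p - 2) / 2)) • x

theorem le_inner_powerLawStress_sub {ν₀ p : ℝ} (hν : 0 ≤ ν₀) (hp1 : 1 ≤ p) (hp2 : p ≤ 2)
    (x y : E) :
    ν₀ * (p - 1) * (1 + ‖x‖ ^ 2 + ‖y‖ ^ 2) ^ ((p - 2) / 2) * ‖x - y‖ ^ 2 ≤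
      ⟪powerLawStress ν₀ p x - powerLawStress ν₀ p y, x - y⟫ := by
  have hq : (p - 2) / 2 ≤ 0 := by linarith
  have hexpand : ⟪powerLawStress ν₀ p x - powerLawStress ν₀ p y, x - y⟫ =
      ν₀ * (1 + ‖x‖ ^ 2) ^ ((p - 2) / 2) * ‖x‖ ^ 2 + ν₀ * (1 + ‖y‖ ^ 2) ^ ((p - 2) / 2) * ‖y‖ ^ 2
        - ν₀ * ((1 + ‖x‖ ^ 2) ^ ((p - 2) / 2) + (1 + ‖y‖ ^ 2) ^ ((p - 2) / 2)) * ⟪x, y⟫ := by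
    simp only [powerLawStress, inner_sub_left, inner_sub_right, real_inner_smul_left,
      real_inner_self_eq_norm_sq, real_inner_comm x y]
    ring
  have hx : (1 + ‖x‖ ^ 2 + ‖y‖ ^ 2) ^ ((p - 2) / 2) ≤ (1 + ‖x‖ ^ 2) ^ ((p - 2) / 2) :=
    Real.rpow_le_rpow_of_nonpos (by positivity) (by nlinarith) hq
  have hy : (1 + ‖x‖ ^ 2 + ‖y‖ ^ 2) ^ ((p - 2) / 2) ≤ (1 + ‖y‖ ^ 2) ^ ((p - 2) / 2) :=
    Real.rpow_le_rpow_of_nonpos (by positivity) (by nlinarith) hq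
  have hψ : 0 ≤ (1 + ‖x‖ ^ 2 + ‖y‖ ^ 2) ^ ((p - 2) / 2) := by positivity
  have hscalar := le_mul_one_add_sq_rpow_sub_mul_sub hp1 hp2 ‖x‖ ‖y‖
  have hweights : 0 ≤ (1 + ‖x‖ ^ 2) ^ ((p - 2) / 2) + (1 + ‖y‖ ^ 2) ^ ((p - 2) / 2)
      - 2 * (p - 1) * (1 + ‖x‖ ^ 2 + ‖y‖ ^ 2) ^ ((p - 2) / 2) := by nlinarith
  have hcs := real_inner_le_norm x y
  rw [hexpand, norm_sub_sq_real]
  nlinarith [mul_le_mul_of_nonneg_left hscalar hν,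
    mul_nonneg hν (mul_nonneg (sub_nonneg.2 hcs) hweights)]

end PowerLaw

def Matrix.toEuclideanSpace {m n : Type*} (A : Matrix m n ℝ) : EuclideanSpace ℝ (m × n) :=
  WithLp.toLp 2 (Function.uncurry A)

theorem Matrix.toEuclideanSpace_sub {m n : Type*} (A B : Matrix m n ℝ) :
    (A - B).toEuclideanSpace = A.toEuclideanSpace - B.toEuclideanSpace := rfl

theorem Matrix.inner_toEuclideanSpace {m n : Type*} [Fintype m] [Fintype n]
    (A B : Matrix m n ℝ) :
    ⟪A.toEuclideanSpace, B.toEuclideanSpace⟫ = ∑ k, ∑ l, A k l * B k l := by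
  simp only [Matrix.toEuclideanSpace, PiLp.inner_apply, RCLike.inner_apply, conj_trivial,
    Fintype.sum_prod_type, mul_comm]
  rfl

theorem frobSq_eq_norm_sq (A : Matrix (Fin 2) (Fin 2) ℝ) :
    frobSq A = ‖A.toEuclideanSpace‖ ^ 2 := by
  rw [← real_inner_self_eq_norm_sq, Matrix.inner_toEuclideanSpace, frobSq]
  simp only [sq]

theorem toEuclideanSpace_Spow (ν₀ p : ℝ) (A : Matrix (Fin 2) (Fin 2) ℝ) :
    (Spow ν₀ p A).toEuclideanSpace = powerLawStress ν₀ p A.toEuclideanSpace := by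
  rw [powerLawStress, ← frobSq_eq_norm_sq]
  rfl

theorem stmt13 (ν₀ p : ℝ) (hν : 0 < ν₀) (hp1 : 1 < p) (hp2 : p < 2) :
    ∃ C > (0 : ℝ), ∀ A B : Matrix (Fin 2) (Fin 2) ℝ, A.IsSymm → B.IsSymm →
      ∑ k, ∑ l, (Spow ν₀ p A k l - Spow ν₀ p B k l) * (A k l - B k l)
        ≥ C * (1 + frobSq A + frobSq B) ^ ((p - 2) / 2) * frobSq (A - B) := by
  refine ⟨ν₀ * (p - 1), mul_pos hν (sub_pos.2 hp1), fun A B _ _ => ?_⟩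
  simpa only [← toEuclideanSpace_Spow, ← Matrix.toEuclideanSpace_sub, ← frobSq_eq_norm_sq,
    Matrix.inner_toEuclideanSpace, Matrix.sub_apply] using
    le_inner_powerLawStress_sub hν.le hp1.le hp2.le A.toEuclideanSpace B.toEuclideanSpace
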